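/- Let q be a prime power and k, m positive integers. If C and C' are two non-zero MRD codes in Mat(k×m, F_q) with the same minimum rank, then C and C' have the same rank distribution, i.e., A_i(C) = A_i(C') for all i ≥ 0. -/

import Mathlib

open Matrix BigOperators

/-- The Gaussian (q-)binomial coefficient, defined via the q-Pascal recursion. -/
def qBinom (q : ℕ) : ℕ → ℕ → ℕ
  | _, 0 => 1
  | 0, _ + 1 => 0
  | s + 1, t + 1 => qBinom q s t + q ^ (t + 1) * qBinom q s (t + 1)

variable {F : Type} [Field F]

/-- The dual of a rank-metric code with respect to the trace product. -/
def dualCode {k m : ℕ} (C : Submodule F (Matrix (Fin k) (Fin m) F)) :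
    Submodule F (Matrix (Fin k) (Fin m) F) where
  carrier := {N | ∀ M ∈ C, Matrix.trace (M * Nᵀ) = 0}
  add_mem' := by
    intro a b ha hb M hM
    rw [Set.mem_setOf_eq] at *
    rw [Matrix.transpose_add, Matrix.mul_add, Matrix.trace_add, ha M hM, hb M hM, add_zero]
  zero_mem' := by
    intro M hM
    simp
  smul_mem' := by
    intro c N hN M hM
    rw [Set.mem_setOf_eq] at *
    rw [Matrix.transpose_smul, Matrix.mul_smul, Matrix.trace_smul, hN M hM, smul_zero]

/-- Minimum rank of a code. -/
noncomputable def minrk {k m : ℕ} (C : Submodule F (Matrix (Fin k) (Fin m) F)) : ℕ :=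
  sInf {r | ∃ M ∈ C, M ≠ 0 ∧ M.rank = r}

/-- Maximum rank of a code. -/
noncomputable def maxrk {k m : ℕ} (C : Submodule F (Matrix (Fin k) (Fin m) F)) : ℕ :=
  sSup {r | ∃ M ∈ C, M.rank = r}

/-- Rank distribution of a code. -/
noncomputable def rankDist {k m : ℕ} (C : Submodule F (Matrix (Fin k) (Fin m) F)) (i : ℕ) : ℕ :=
  Nat.card {M : Matrix (Fin k) (Fin m) F // M ∈ C ∧ M.rank = i}

/-- MRD codes. -/
def IsMRD {k m : ℕ} (C : Submodule F (Matrix (Fin k) (Fin m) F)) : Prop :=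
  C = ⊥ ∨ Module.finrank F ↥C = max k m * (min k m - minrk C + 1)

/-- Optimal anticodes. -/
def IsOptimalAnticode {k m : ℕ} (C : Submodule F (Matrix (Fin k) (Fin m) F)) : Prop :=
  Module.finrank F ↥C = max k m * maxrk C

/-- The subspace of matrices whose column space is contained in `U`. -/
def matIn {k : ℕ} (m : ℕ) (U : Submodule F (Fin k → F)) :
    Submodule F (Matrix (Fin k) (Fin m) F) where
  carrier := {M | ∀ j, Mᵀ j ∈ U}
  add_mem' := by
    intro a b ha hb j
    rw [Matrix.transpose_add]
    exact U.add_mem (ha j) (hb j)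
  zero_mem' := by
    intro j
    rw [Matrix.transpose_zero]
    exact U.zero_mem
  smul_mem' := by
    intro c M hM j
    rw [Matrix.transpose_smul]
    exact U.smul_mem c (hM j)

/-- The dual of a subspace of `Fin k → K` with respect to the standard inner product. -/
def dualPi {K : Type} [Field K] {k : ℕ} (C : Submodule K (Fin k → K)) :
    Submodule K (Fin k → K) where
  carrier := {β | ∀ α ∈ C, ∑ i, α i * β i = 0}
  add_mem' := by
    intro a b ha hb α hα
    rw [Set.mem_setOf_eq] at *
    have : ∑ i, α i * (a + b) i = (∑ i, α i * a i) + ∑ i, α i * b i := by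
      rw [← Finset.sum_add_distrib]
      exact Finset.sum_congr rfl fun i _ => by simp [mul_add]
    rw [this, ha α hα, hb α hα, add_zero]
  zero_mem' := by
    intro α hα
    simp
  smul_mem' := by
    intro c β hβ α hα
    rw [Set.mem_setOf_eq] at *
    have : ∑ i, α i * (c • β) i = c * ∑ i, α i * β i := by
      rw [Finset.mul_sum]
      exact Finset.sum_congr rfl fun i _ => by simp [smul_eq_mul]; ring
    rw [this, hβ α hα, mul_zero]

/-- The matrix associated to a vector `α ∈ K^k` with respect to a basis `G` of `K` over `F`. -/
noncomputable def matOfBasis (F K : Type) [Field F] [Field K] [Algebra F K]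
    (k m : ℕ) (G : Module.Basis (Fin m) F K) :
    (Fin k → K) →ₗ[F] Matrix (Fin k) (Fin m) F where
  toFun α := Matrix.of fun i j => G.repr (α i) j
  map_add' α β := by
    ext i j
    simp
  map_smul' c α := by
    ext i j
    simp

/-- The `h`-trace of a `k × m` matrix (`k ≤ m`). -/
def hTrace {k m : ℕ} (hkm : k ≤ m) (h : ℕ) (M : Matrix (Fin k) (Fin m) F) : F :=
  ∑ i : Fin k, if (i : ℕ) < h then M i (Fin.castLE hkm i) else 0

/-!
For `k ≤ m`, an MRD code `C` with minimum rank `d` meets the space `matIn m U` of matrices with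
column space inside `U` in a subspace of dimension exactly `m (dim U - d + 1)⁺`: Grassmann's formula
gives the lower bound against all of `Mat(k × m)`, and the upper bound because `C ⊓ matIn m U`
meets `matIn m W` trivially for any `W ≤ U` of dimension `d - 1`. Sorting codewords by column
space, `#(C ⊓ matIn m U)` is the sum over `V ≤ U` of the number of codewords with column space `V`;
as the left side depends only on `dim U`, `m` and `d`, Möbius inversion on the subspace lattice
determines the number of codewords with each column space, hence the rank distribution. The case
`k > m` reduces to this one by transposition.
-/

open Module Finset

theorem Submodule.exists_le_finrank_eq {K V : Type*} [DivisionRing K] [AddCommGroup V]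
    [Module K V] (U : Submodule K V) [FiniteDimensional K U] {n : ℕ} (hn : n ≤ finrank K U) :
    ∃ W ≤ U, finrank K W = n := by
  let b := Module.finBasis K U
  refine ⟨(span K (Set.range (b ∘ Fin.castLE hn))).map U.subtype, map_subtype_le _ _, ?_⟩
  rw [finrank_map_subtype_eq, finrank_span_eq_card
    (b.linearIndependent.comp _ (Fin.castLE_injective hn)), Fintype.card_fin]

theorem eq_of_forall_sum_le_eq {α β : Type*} [PartialOrder α] [Fintype α] [DecidableLE α]
    [AddCancelCommMonoid β] {f g : α → β}
    (h : ∀ a, ∑ b ∈ univ.filter (· ≤ a), f b = ∑ b ∈ univ.filter (· ≤ a), g b) :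
    f = g := by
  classical
  funext a
  induction a using WellFoundedLT.induction with
  | _ a ih =>
    have split (φ : α → β) :
        ∑ b ∈ univ.filter (· ≤ a), φ b = φ a + ∑ b ∈ univ.filter (· < a), φ b := by
      rw [← add_sum_erase (univ.filter (· ≤ a)) φ (a := a) (by simp)]
      congr 2
      ext b
      simp [lt_iff_le_and_ne, and_comm]
    have := h a
    rw [split, split, sum_congr rfl fun b hb => ih b (mem_filter.mp hb).2] at this
    exact add_right_cancel this

section MatIn

variable {k m : ℕ}

theorem mem_matIn_iff_range_le {U : Submodule F (Fin k → F)} {M : Matrix (Fin k) (Fin m) F} :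
    M ∈ matIn m U ↔ LinearMap.range M.mulVecLin ≤ U := by
  rw [Matrix.range_mulVecLin, Submodule.span_le, Set.range_subset_iff]
  rfl

theorem rank_le_finrank_of_mem_matIn {U : Submodule F (Fin k → F)}
    {M : Matrix (Fin k) (Fin m) F} (hM : M ∈ matIn m U) : M.rank ≤ finrank F U :=
  Submodule.finrank_mono (mem_matIn_iff_range_le.mp hM)

theorem matIn_mono {W U : Submodule F (Fin k → F)} (h : W ≤ U) : matIn m W ≤ matIn m U :=
  fun _ hM j => h (hM j)

def matInEquiv (U : Submodule F (Fin k → F)) : matIn m U ≃ₗ[F] (Fin m → U) where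
  toFun M j := ⟨(M : Matrix (Fin k) (Fin m) F)ᵀ j, M.2 j⟩
  invFun f := ⟨(Matrix.of fun j => (f j : Fin k → F))ᵀ, fun j => (f j).2⟩
  map_add' _ _ := rfl
  map_smul' _ _ := rfl
  left_inv _ := rfl
  right_inv _ := rfl

theorem finrank_matIn (U : Submodule F (Fin k → F)) :
    finrank F (matIn m U) = m * finrank F U := by
  rw [(matInEquiv U).finrank_eq, finrank_pi_fintype, sum_const, card_univ, Fintype.card_fin,
    smul_eq_mul]

end MatIn

section Codes

variable {k m : ℕ} {C : Submodule F (Matrix (Fin k) (Fin m) F)}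

theorem minrk_le_rank {M : Matrix (Fin k) (Fin m) F} (hM : M ∈ C) (h0 : M ≠ 0) :
    minrk C ≤ M.rank :=
  Nat.sInf_le ⟨M, hM, h0, rfl⟩

theorem exists_rank_eq_minrk (hC : C ≠ ⊥) : ∃ M ∈ C, M ≠ 0 ∧ M.rank = minrk C := by
  obtain ⟨M, hM, h0⟩ := Submodule.exists_mem_ne_zero_of_ne_bot hC
  exact Nat.sInf_mem (s := {r | ∃ M ∈ C, M ≠ 0 ∧ M.rank = r}) ⟨M.rank, M, hM, h0, rfl⟩

theorem one_le_minrk (hC : C ≠ ⊥) : 1 ≤ minrk C := by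
  obtain ⟨M, -, h0, hM⟩ := exists_rank_eq_minrk hC
  rw [← hM, Nat.one_le_iff_ne_zero]
  intro hrk
  have : M.mulVecLin = 0 :=
    LinearMap.range_eq_bot.mp (Submodule.finrank_eq_zero.mp hrk)
  exact h0 (Matrix.toLin'.injective (by rw [Matrix.toLin'_apply', this, map_zero]))

theorem minrk_le_height (hC : C ≠ ⊥) : minrk C ≤ k := by
  obtain ⟨M, -, -, hM⟩ := exists_rank_eq_minrk hC
  exact hM ▸ M.rank_le_height

theorem inf_matIn_eq_bot {W : Submodule F (Fin k → F)} (hW : finrank F W < minrk C) :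
    C ⊓ matIn m W = ⊥ := by
  refine (Submodule.eq_bot_iff _).mpr fun M hM => ?_
  obtain ⟨hMC, hMW⟩ := Submodule.mem_inf.mp hM
  by_contra h0
  exact (minrk_le_rank hMC h0).not_gt ((rank_le_finrank_of_mem_matIn hMW).trans_lt hW)

theorem finrank_of_isMRD (hkm : k ≤ m) (hC : IsMRD C) (hC0 : C ≠ ⊥) :
    finrank F C = m * (k - minrk C + 1) := by
  rcases hC with h | h
  · exact absurd h hC0
  · rwa [max_eq_right hkm, min_eq_left hkm] at h

theorem finrank_inf_matIn_of_isMRD (hkm : k ≤ m) (hC : IsMRD C) (hC0 : C ≠ ⊥)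
    (U : Submodule F (Fin k → F)) :
    finrank F ↥(C ⊓ matIn m U) = m * (finrank F U + 1 - minrk C) := by
  have hd := one_le_minrk hC0
  have hdk := minrk_le_height hC0
  rcases lt_or_ge (finrank F U) (minrk C) with hU | hU
  · rw [inf_matIn_eq_bot hU, finrank_bot, Nat.sub_eq_zero_of_le hU, mul_zero]
  obtain ⟨W, hWU, hW⟩ := U.exists_le_finrank_eq (n := minrk C - 1) (by omega)
  have lower : finrank F C + finrank F (matIn m U) ≤ finrank F ↥(C ⊓ matIn m U) + k * m := by
    rw [← Submodule.finrank_sup_add_finrank_inf_eq, add_comm]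
    have := Submodule.finrank_le (C ⊔ matIn m U)
    rw [finrank_matrix, Fintype.card_fin, Fintype.card_fin, finrank_self, mul_one] at this
    omega
  have upper :
      finrank F ↥(C ⊓ matIn m U) + finrank F (matIn m W) ≤ finrank F (matIn m U) := by
    have hbot : C ⊓ matIn m U ⊓ matIn m W = ⊥ := by
      rw [inf_assoc, inf_eq_right.mpr (matIn_mono hWU), inf_matIn_eq_bot (by omega)]
    rw [← Submodule.finrank_sup_add_finrank_inf_eq, hbot, finrank_bot, add_zero]
    exact Submodule.finrank_mono (sup_le inf_le_right (matIn_mono hWU))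
  rw [finrank_of_isMRD hkm hC hC0, finrank_matIn] at lower
  rw [finrank_matIn, finrank_matIn, hW] at upper
  have hU' : m * finrank F U = m * (finrank F U + 1 - minrk C) + m * (minrk C - 1) := by
    rw [← mul_add]; congr 1; omega
  have hk' : k * m = m * (k - minrk C + 1) + m * (minrk C - 1) := by
    rw [← mul_add, mul_comm]; congr 1; omega
  omega

theorem card_inf_matIn_of_isMRD (hkm : k ≤ m) (hC : IsMRD C) (hC0 : C ≠ ⊥)
    (U : Submodule F (Fin k → F)) :
    Nat.card ↥(C ⊓ matIn m U) = Nat.card F ^ (m * (finrank F U + 1 - minrk C)) := by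
  rw [← finrank_inf_matIn_of_isMRD hkm hC hC0 U, Module.natCard_eq_pow_finrank (K := F)]

end Codes

section Counting

variable [Fintype F] {k m : ℕ}

open Classical in
noncomputable def colSpaceCount (D : Submodule F (Matrix (Fin k) (Fin m) F))
    (V : Submodule F (Fin k → F)) : ℕ :=
  #{M | M ∈ D ∧ LinearMap.range M.mulVecLin = V}

open Classical in
theorem card_filter_range_eq_sum (D : Submodule F (Matrix (Fin k) (Fin m) F))
    (P : Submodule F (Fin k → F) → Prop) [DecidablePred P] :
    #{M | M ∈ D ∧ P (LinearMap.range M.mulVecLin)} =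
      ∑ V ∈ univ.filter P, colSpaceCount D V := by
  rw [card_eq_sum_card_fiberwise (f := fun M => LinearMap.range M.mulVecLin) (t := univ.filter P)
    fun M hM => by simpa using (mem_filter.mp hM).2.2]
  refine sum_congr rfl fun V hV => congrArg card (Finset.ext fun M => ?_)
  simp only [mem_filter, mem_univ, true_and]
  constructor
  · rintro ⟨⟨hMD, -⟩, hMV⟩
    exact ⟨hMD, hMV⟩
  · rintro ⟨hMD, rfl⟩
    exact ⟨⟨hMD, (mem_filter.mp hV).2⟩, rfl⟩

open Classical in
theorem card_inf_matIn_eq_sum (D : Submodule F (Matrix (Fin k) (Fin m) F))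
    (U : Submodule F (Fin k → F)) :
    Nat.card ↥(D ⊓ matIn m U) = ∑ V ∈ univ.filter (· ≤ U), colSpaceCount D V := by
  rw [← card_filter_range_eq_sum, Nat.card_eq_fintype_card, Fintype.card_subtype]
  simp only [Submodule.mem_inf, mem_matIn_iff_range_le]

open Classical in
theorem rankDist_eq_sum (D : Submodule F (Matrix (Fin k) (Fin m) F)) (i : ℕ) :
    rankDist D i = ∑ V ∈ univ.filter (fun V : Submodule F (Fin k → F) => finrank F V = i),
      colSpaceCount D V := by
  rw [← card_filter_range_eq_sum, rankDist, Nat.card_eq_fintype_card, Fintype.card_subtype]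
  rfl

end Counting

theorem rankDist_eq_of_isMRD_of_le [Fintype F] {k m : ℕ} (hkm : k ≤ m)
    {C C' : Submodule F (Matrix (Fin k) (Fin m) F)} (hC : IsMRD C) (hC' : IsMRD C')
    (hC0 : C ≠ ⊥) (hC'0 : C' ≠ ⊥) (hmin : minrk C = minrk C') :
    rankDist C = rankDist C' := by
  classical
  have hcount : colSpaceCount C = colSpaceCount C' :=
    eq_of_forall_sum_le_eq fun U => by
      rw [← card_inf_matIn_eq_sum, ← card_inf_matIn_eq_sum, card_inf_matIn_of_isMRD hkm hC hC0,
        card_inf_matIn_of_isMRD hkm hC' hC'0, hmin]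
  funext i
  rw [rankDist_eq_sum, rankDist_eq_sum, hcount]

section RankPreserving

variable {k m k' m' : ℕ} (Φ : Matrix (Fin k) (Fin m) F ≃ₗ[F] Matrix (Fin k') (Fin m') F)

theorem minrk_map (hΦ : ∀ M, (Φ M).rank = M.rank)
    (C : Submodule F (Matrix (Fin k) (Fin m) F)) : minrk (C.map Φ.toLinearMap) = minrk C := by
  unfold minrk
  congr 1
  ext r
  constructor
  · rintro ⟨N, hN, h0, rfl⟩
    rw [Submodule.mem_map_equiv] at hN
    exact ⟨Φ.symm N, hN, by simpa using h0, by rw [← hΦ, Φ.apply_symm_apply]⟩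
  · rintro ⟨M, hM, h0, rfl⟩
    exact ⟨Φ M, Submodule.mem_map_of_mem hM, by simpa using h0, hΦ M⟩

theorem rankDist_map (hΦ : ∀ M, (Φ M).rank = M.rank)
    (C : Submodule F (Matrix (Fin k) (Fin m) F)) :
    rankDist (C.map Φ.toLinearMap) = rankDist C := by
  funext i
  refine Nat.card_congr (Equiv.subtypeEquiv Φ.symm.toEquiv fun N => ?_)
  simp [Submodule.mem_map_equiv, ← hΦ (Φ.symm N)]

end RankPreserving

theorem isMRD_map_transpose {k m : ℕ} {C : Submodule F (Matrix (Fin k) (Fin m) F)}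
    (hC : IsMRD C) :
    IsMRD (C.map (Matrix.transposeLinearEquiv (Fin k) (Fin m) F F).toLinearMap) := by
  unfold IsMRD at hC ⊢
  rw [Submodule.map_eq_bot_iff, LinearEquiv.finrank_map_eq,
    minrk_map (Matrix.transposeLinearEquiv _ _ F F) Matrix.rank_transpose, max_comm m, min_comm m]
  exact hC

theorem stmt_9_general (F : Type) [Field F] [Fintype F] (k m : ℕ)
    (C C' : Submodule F (Matrix (Fin k) (Fin m) F))
    (hC : IsMRD C) (hC' : IsMRD C') (hC0 : C ≠ ⊥) (hC'0 : C' ≠ ⊥)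
    (hmin : minrk C = minrk C') :
    ∀ i : ℕ, rankDist C i = rankDist C' i := by
  rcases le_total k m with hkm | hmk
  · exact congrFun (rankDist_eq_of_isMRD_of_le hkm hC hC' hC0 hC'0 hmin)
  · let T := Matrix.transposeLinearEquiv (Fin k) (Fin m) F F
    have hT : ∀ M, (T M).rank = M.rank := Matrix.rank_transpose
    rw [← rankDist_map T hT C, ← rankDist_map T hT C']
    refine congrFun (rankDist_eq_of_isMRD_of_le hmk (isMRD_map_transpose hC)
      (isMRD_map_transpose hC') ?_ ?_ ?_)
    · rwa [Ne, Submodule.map_eq_bot_iff]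
    · rwa [Ne, Submodule.map_eq_bot_iff]
    · rw [minrk_map T hT, minrk_map T hT, hmin]

/-- The rank distribution of a non-zero MRD code only depends on `k`, `m` and the minimum
rank. -/
theorem stmt_9 (F : Type) [Field F] [Fintype F] (k m : ℕ) (hk : 0 < k) (hm : 0 < m)
    (C C' : Submodule F (Matrix (Fin k) (Fin m) F))
    (hC : IsMRD C) (hC' : IsMRD C') (hC0 : C ≠ ⊥) (hC'0 : C' ≠ ⊥)
    (hmin : minrk C = minrk C') :
    ∀ i : ℕ, rankDist C i = rankDist C' i :=
  stmt_9_general F k m C C' hC hC' hC0 hC'0 hmin
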